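/- Let K be a field and let B = Matrix.fromBlocks H J K' L be an (n+m)×(n+m) matrix over K with H of size n×n and L of size m×m invertible, and let D = H − J·L⁻¹·K' be the Schur complement of L in B. Then for every k and all finsets S, T ⊆ Fin n with S.card = T.card = k, one has det B[Ŝ ∪ M̂, T̂ ∪ M̂] = det L · det D[S,T]. -/

import Mathlib

open Matrix

/-- Determinant of the submatrix of `A` with rows indexed by the elements of `S` and
columns indexed by the elements of `T`, each listed in increasing order.
Defined to be `0` if the cardinalities of `S` and `T` differ
(the empty determinant is `1`). -/
noncomputable def fminor {ι R : Type*} [LinearOrder ι] [CommRing R]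
    (A : Matrix ι ι R) (S T : Finset ι) : R :=
  if h : S.card = T.card then
    (Matrix.of fun i j : Fin T.card =>
      A (S.orderEmbOfFin h i) (T.orderEmbOfFin rfl j)).det
  else 0

/-- `Fin n ⊕ Fin m` linearly ordered so that every element of the left summand precedes
every element of the right summand, each summand with its natural order. -/
abbrev SumLexIdx (n m : ℕ) := Lex (Fin n ⊕ Fin m)

/-- Inclusion of `Fin n` as the left block. -/
def inlL {n m : ℕ} (i : Fin n) : SumLexIdx n m := toLex (Sum.inl i)

/-- Inclusion of `Fin m` as the right block. -/
def inrL {n m : ℕ} (j : Fin m) : SumLexIdx n m := toLex (Sum.inr j)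

/-- View a matrix indexed by `Fin n ⊕ Fin m` as a matrix indexed by the linearly
ordered index type `SumLexIdx n m`. -/
def toLexMat {n m : ℕ} {R : Type*} (A : Matrix (Fin n ⊕ Fin m) (Fin n ⊕ Fin m) R) :
    Matrix (SumLexIdx n m) (SumLexIdx n m) R := fun i j => A (ofLex i) (ofLex j)

/-!
Listed in increasing order, the rows `Ŝ ∪ M̂` are the rows of `S` followed by all rows of the
right block, and likewise for the columns. So the minor is the determinant of the block matrix
`[[H[S,T], J[S,·]], [K'[·,T], L]]`, and Schur's determinant formula expands it as
`det L * det (H[S,T] - J[S,·] L⁻¹ K'[·,T])`; the second factor is the `(S,T)` minor of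
`H - J L⁻¹ K'`. When `S.card ≠ T.card` both sides are `0`.
-/

section Minor

variable {ι R : Type*} [LinearOrder ι] [CommRing R]

lemma fminor_of_card_ne (A : Matrix ι ι R) {S T : Finset ι} (h : S.card ≠ T.card) :
    fminor A S T = 0 :=
  dif_neg h

lemma fminor_eq_det_submatrix {p : ℕ} (A : Matrix ι ι R) {S T : Finset ι} {f g : Fin p → ι}
    (hS : S.card = p) (hT : T.card = p) (hfS : ∀ i, f i ∈ S) (hgT : ∀ i, g i ∈ T)
    (hf : StrictMono f) (hg : StrictMono g) : fminor A S T = (A.submatrix f g).det := by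
  subst hT
  rw [fminor, dif_pos hS, Finset.orderEmbOfFin_unique hS hfS hf,
    Finset.orderEmbOfFin_unique rfl hgT hg]
  rfl

end Minor

lemma strictMono_toLex_sumMap_comp_finSumFinEquiv_symm {α β : Type*} [Preorder α] [Preorder β]
    {p q : ℕ} {f : Fin p → α} {g : Fin q → β} (hf : StrictMono f) (hg : StrictMono g) :
    StrictMono (toLex ∘ Sum.map f g ∘ finSumFinEquiv.symm) := by
  intro i j hij
  induction i using Fin.addCases <;> induction j using Fin.addCases <;>
    simp only [Function.comp_apply, finSumFinEquiv_symm_apply_castAdd,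
      finSumFinEquiv_symm_apply_natAdd, Sum.map_inl, Sum.map_inr, Sum.Lex.toLex_lt_toLex,
      Sum.lex_inl_inl, Sum.lex_inr_inr, Sum.lex_inr_inl, Sum.Lex.sep, hf.lt_iff_lt, hg.lt_iff_lt]
  all_goals simp only [Fin.lt_def, Fin.val_castAdd, Fin.val_natAdd] at hij ⊢; omega

lemma Matrix.fromBlocks_submatrix_sumMap {α l m n o l' m' n' o' : Type*}
    (A : Matrix n l α) (B : Matrix n m α) (C : Matrix o l α) (D : Matrix o m α)
    (f₁ : n' → n) (f₂ : o' → o) (g₁ : l' → l) (g₂ : m' → m) :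
    (fromBlocks A B C D).submatrix (Sum.map f₁ f₂) (Sum.map g₁ g₂) =
      fromBlocks (A.submatrix f₁ g₁) (B.submatrix f₁ g₂)
        (C.submatrix f₂ g₁) (D.submatrix f₂ g₂) := by
  ext (i | i) (j | j) <;> rfl

lemma Matrix.submatrix_sub_mul_mul {R l l' m m' n o : Type*} [CommRing R] [Fintype n]
    [Fintype o] (A : Matrix m m' R) (B : Matrix m n R) (X : Matrix n o R) (C : Matrix o m' R)
    (f : l → m) (g : l' → m') :
    (A - B * X * C).submatrix f g = A.submatrix f g - B.submatrix f id * X * C.submatrix id g := by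
  change A.submatrix f g - (B * X * C).submatrix f g = _
  rw [submatrix_mul _ _ _ id _ Function.bijective_id,
    submatrix_mul _ _ _ id _ Function.bijective_id, submatrix_id_id]

lemma Matrix.det_submatrix_sumMap_fromBlocks₂₂ {R l m n : Type*} [CommRing R]
    [Fintype l] [DecidableEq l] [Fintype n] [DecidableEq n]
    (A : Matrix m m R) (B : Matrix m n R) (C : Matrix n m R) (D : Matrix n n R)
    (hD : IsUnit D.det) (f g : l → m) :
    ((fromBlocks A B C D).submatrix (Sum.map f id) (Sum.map g id)).det =
      D.det * ((A - B * D⁻¹ * C).submatrix f g).det := by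
  let := D.invertibleOfIsUnitDet hD
  rw [fromBlocks_submatrix_sumMap, submatrix_id_id, det_fromBlocks₂₂, invOf_eq_nonsing_inv,
    submatrix_sub_mul_mul]

lemma card_image_inlL_union_image_inrL {n m : ℕ} (S : Finset (Fin n)) :
    (S.image inlL ∪ (Finset.univ : Finset (Fin m)).image inrL).card = S.card + m := by
  rw [Finset.card_union_of_disjoint (Finset.disjoint_left.2 (by simp [inlL, inrL])),
    Finset.card_image_of_injective (f := inlL) _ (toLex.injective.comp Sum.inl_injective),
    Finset.card_image_of_injective (f := inrL) _ (toLex.injective.comp Sum.inr_injective),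
    Finset.card_univ, Fintype.card_fin]

lemma sumMap_mem_image_inlL_union_image_inrL {n m p : ℕ} {S : Finset (Fin n)}
    {s : Fin p → Fin n} (hs : ∀ i, s i ∈ S) (x : Fin p ⊕ Fin m) :
    toLex (Sum.map s id x) ∈ S.image inlL ∪ (Finset.univ : Finset (Fin m)).image inrL := by
  rcases x with a | b
  · exact Finset.mem_union_left _ (Finset.mem_image_of_mem inlL (hs a))
  · exact Finset.mem_union_right _ (Finset.mem_image_of_mem inrL (Finset.mem_univ b))

theorem minor_fromBlocks_full_right_eq_det_mul_minor_schur_general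
    {K : Type*} [Field K] {n m : ℕ}
    (H : Matrix (Fin n) (Fin n) K) (J : Matrix (Fin n) (Fin m) K)
    (K' : Matrix (Fin m) (Fin n) K) (L : Matrix (Fin m) (Fin m) K)
    (hL : IsUnit L.det)
    (S T : Finset (Fin n)) :
    fminor (toLexMat (Matrix.fromBlocks H J K' L))
        (S.image inlL ∪ (Finset.univ : Finset (Fin m)).image inrL)
        (T.image inlL ∪ (Finset.univ : Finset (Fin m)).image inrL)
      = L.det * fminor (H - J * L⁻¹ * K') S T := by
  by_cases hST : S.card = T.card
  · let s := S.orderEmbOfFin hST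
    let t := T.orderEmbOfFin rfl
    rw [fminor_eq_det_submatrix _ hST rfl (S.orderEmbOfFin_mem hST) (T.orderEmbOfFin_mem rfl)
        s.strictMono t.strictMono, ← det_submatrix_sumMap_fromBlocks₂₂ _ _ _ _ hL,
      ← det_submatrix_equiv_self finSumFinEquiv.symm]
    exact fminor_eq_det_submatrix _
      (by rw [card_image_inlL_union_image_inrL, hST]) (card_image_inlL_union_image_inrL T)
      (fun _ => sumMap_mem_image_inlL_union_image_inrL (S.orderEmbOfFin_mem hST) _)
      (fun _ => sumMap_mem_image_inlL_union_image_inrL (T.orderEmbOfFin_mem rfl) _)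
      (strictMono_toLex_sumMap_comp_finSumFinEquiv_symm s.strictMono strictMono_id)
      (strictMono_toLex_sumMap_comp_finSumFinEquiv_symm t.strictMono strictMono_id)
  · rw [fminor_of_card_ne _ (by simpa [card_image_inlL_union_image_inrL] using hST),
      fminor_of_card_ne _ hST, mul_zero]

/-- For `B = fromBlocks H J K' L` with `L` invertible and Schur complement
`D = H - J L⁻¹ K'`, the minor of `B` on rows `Ŝ ∪ M̂` and columns `T̂ ∪ M̂`
(where `M̂` is the full right block) equals `det L` times the minor of `D`
on rows `S` and columns `T`. -/
theorem minor_fromBlocks_full_right_eq_det_mul_minor_schur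
    {K : Type*} [Field K] {n m : ℕ}
    (H : Matrix (Fin n) (Fin n) K) (J : Matrix (Fin n) (Fin m) K)
    (K' : Matrix (Fin m) (Fin n) K) (L : Matrix (Fin m) (Fin m) K)
    (hL : IsUnit L.det)
    (k : ℕ) (S T : Finset (Fin n)) (hS : S.card = k) (hT : T.card = k) :
    fminor (toLexMat (Matrix.fromBlocks H J K' L))
        (S.image inlL ∪ (Finset.univ : Finset (Fin m)).image inrL)
        (T.image inlL ∪ (Finset.univ : Finset (Fin m)).image inrL)
      = L.det * fminor (H - J * L⁻¹ * K') S T :=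
  minor_fromBlocks_full_right_eq_det_mul_minor_schur_general H J K' L hL S T
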